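/- Let I be a nonempty index set, let Σ be a subcomplex of Σ(I) equipped with the ℓ₂-metric, let Y be a metric space, h : |Σ| → Y a map, L > 0, and A ⊂ |Σ| a nonempty subset such that h is L-Lipschitz on every face σ of Σ with st σ ∩ A ≠ ∅. Then the restriction h' of h to |Hull(A)| satisfies lip h'(x) ≤ L for every x ∈ |Hull(A)|. -/

import Mathlib

open Set Metric Filter MeasureTheory
open scoped ENNReal NNReal

noncomputable section

/-- The real Hilbert space `ℓ₂(I)`. -/
abbrev L2 (I : Type*) := lp (fun _ : I => ℝ) 2

/-- The standard unit vector `e_i ∈ ℓ₂(I)`. -/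
noncomputable def stdVec {I : Type*} (i : I) : L2 I :=
  letI := Classical.decEq I; lp.single 2 i 1

/-- The (closed) face of the full complex `Σ(I)` spanned by the vertices `e_i`, `i ∈ s`:
the convex hull of the corresponding standard unit vectors. -/
def faceSet {I : Type*} (s : Finset I) : Set (L2 I) := convexHull ℝ (stdVec '' (s : Set I))

/-- `x` lies in the relative interior of the face spanned by `s`. -/
def memRelInt {I : Type*} (s : Finset I) (x : L2 I) : Prop :=
  x ∈ faceSet s ∧ ∀ i ∈ s, 0 < x i

/-- A subcomplex of the full complex `Σ(I)`, encoded by the collection of the vertex sets of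
its faces: a nonempty collection of finite nonempty subsets of `I`, closed under passing to
nonempty subsets. -/
structure IsSubcomplex {I : Type*} (F : Set (Finset I)) : Prop where
  nonempty : F.Nonempty
  faces_nonempty : ∀ s ∈ F, s.Nonempty
  down_closed : ∀ s ∈ F, ∀ t : Finset I, t.Nonempty → t ⊆ s → t ∈ F

/-- The underlying set `|Σ| ⊆ ℓ₂(I)` of a (sub)complex: the union of its faces. -/
def cpxCarrier {I : Type*} (F : Set (Finset I)) : Set (L2 I) := ⋃ s ∈ F, faceSet s

/-- The open star of the face with vertex set `s` in the complex `F`: the union of the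
relative interiors of all faces of `F` containing it. -/
def openStar {I : Type*} (F : Set (Finset I)) (s : Finset I) : Set (L2 I) :=
  ⋃ t ∈ F, ⋃ (_ : s ⊆ t), {x | memRelInt t x}

/-- The smallest subcomplex of `F` whose underlying set contains `A`
(encoded by its collection of faces). -/
def hullFaces {I : Type*} (F : Set (Finset I)) (A : Set (L2 I)) : Set (Finset I) :=
  ⋂₀ {G : Set (Finset I) | G ⊆ F ∧ IsSubcomplex G ∧ A ⊆ cpxCarrier G}

/-- The pointwise (lower) Lipschitz constant at `x` of the restriction of `f` to `S`:
`liminf_{s → 0+} s⁻¹ · sup { d(f x, f y) : y ∈ S, d(x,y) < s }`, valued in `ℝ≥0∞`. -/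
noncomputable def lipWithin {X Y : Type*} [PseudoMetricSpace X] [PseudoMetricSpace Y]
    (f : X → Y) (S : Set X) (x : X) : ℝ≥0∞ :=
  Filter.liminf
    (fun s : ℝ => (⨆ y ∈ S ∩ Metric.ball x s, edist (f x) (f y)) / ENNReal.ofReal s)
    (nhdsWithin 0 (Set.Ioi 0))

/-- The pointwise (lower) Lipschitz constant `lip f (x)`, valued in `ℝ≥0∞`. -/
noncomputable def plip {X Y : Type*} [PseudoMetricSpace X] [PseudoMetricSpace Y]
    (f : X → Y) (x : X) : ℝ≥0∞ := lipWithin f Set.univ x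

/-- A subset `S` of a metric space is `c`-quasiconvex: any two of its points are joined by a
continuous curve in `S` of length (total variation) at most `c` times their distance. -/
def QuasiconvexSet {X : Type*} [PseudoMetricSpace X] (S : Set X) (c : ℝ) : Prop :=
  ∀ x ∈ S, ∀ y ∈ S, ∃ γ : ℝ → X, ContinuousOn γ (Set.Icc 0 1) ∧
    Set.MapsTo γ (Set.Icc 0 1) S ∧ γ 0 = x ∧ γ 1 = y ∧
    eVariationOn γ (Set.Icc 0 1) ≤ ENNReal.ofReal (c * dist x y)

/-- The intrinsic (length) metric of `S`: the infimal length of continuous curves in `S`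
joining `x` and `y`, valued in `ℝ≥0∞` (with `inf ∅ = ∞`). -/
noncomputable def intrinsicDist {X : Type*} [PseudoMetricSpace X] (S : Set X) (x y : X) : ℝ≥0∞ :=
  ⨅ (γ : ℝ → X) (_ : ContinuousOn γ (Set.Icc 0 1) ∧ Set.MapsTo γ (Set.Icc 0 1) S ∧
      γ 0 = x ∧ γ 1 = y),
    eVariationOn γ (Set.Icc 0 1)

/-- `X` has Nagata dimension `≤ n` with constant `c`: for every `s > 0` there is a covering of
`X` by sets of diameter `≤ c·s` such that every set of diameter `≤ s` meets at most `n + 1`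
members of the covering. -/
def NagataDimLE (X : Type*) [PseudoMetricSpace X] (n : ℕ) (c : ℝ) : Prop :=
  ∀ s : ℝ, 0 < s → ∃ B : Set (Set X),
    (∀ x : X, ∃ b ∈ B, x ∈ b) ∧
    (∀ b ∈ B, EMetric.diam b ≤ ENNReal.ofReal (c * s)) ∧
    (∀ A : Set X, EMetric.diam A ≤ ENNReal.ofReal s →
      {b | b ∈ B ∧ (b ∩ A).Nonempty}.encard ≤ (n : ℕ∞) + 1)

/-- `Y` is Lipschitz `k`-connected with constant `lam`: for `0 ≤ m ≤ k`, every `L`-Lipschitz map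
from the unit sphere `S^m ⊆ ℝ^{m+1}` to `Y` extends to a `lam·L`-Lipschitz map on the closed
unit ball `B^{m+1}`. -/
def LipschitzConnectedWith (Y : Type*) [PseudoMetricSpace Y] (k : ℕ) (lam : ℝ) : Prop :=
  ∀ m : ℕ, m ≤ k → ∀ L : ℝ, 0 < L →
    ∀ f : EuclideanSpace ℝ (Fin (m + 1)) → Y,
      LipschitzOnWith (Real.toNNReal L) f (Metric.sphere 0 1) →
      ∃ g : EuclideanSpace ℝ (Fin (m + 1)) → Y,
        LipschitzOnWith (Real.toNNReal (lam * L)) g (Metric.closedBall 0 1) ∧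
        Set.EqOn f g (Metric.sphere 0 1)

end

/-! Every face of `Hull(A)` is a face of `Σ` whose open star meets `A`, because those faces
already form a subcomplex whose carrier contains `A`; so `h` is `L`-Lipschitz on each face of
`Hull(A)`. The barycentric coordinates of `x` on its carrier face are positive and stay positive
near `x`, so every face through a point `y` close to `x` contains that carrier face, hence `x`.
Therefore `d(h x, h y) ≤ L · d(x, y)` for all `y ∈ |Hull(A)|` near `x`, and `lip h'(x) ≤ L`. -/

open Topology

section Face

variable {I : Type*}

lemma stdVec_apply [DecidableEq I] (i j : I) :
    (stdVec i : I → ℝ) j = if j = i then 1 else 0 := by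
  by_cases h : j = i
  · subst h; simp [stdVec]
  · simp [stdVec, h]

def barycentricFace (s : Finset I) : Set (L2 I) :=
  {x | (∀ i, 0 ≤ x i) ∧ (∀ i ∉ s, x i = 0) ∧ ∑ i ∈ s, x i = 1}

lemma convex_barycentricFace (s : Finset I) : Convex ℝ (barycentricFace s) := by
  rintro u ⟨hu₀, hus, hu₁⟩ v ⟨hv₀, hvs, hv₁⟩ a b ha hb hab
  have hcoord : ∀ j, (a • u + b • v) j = a * u j + b * v j := fun _ => rfl
  refine ⟨fun i => ?_, fun i hi => ?_, ?_⟩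
  · rw [hcoord]; exact add_nonneg (mul_nonneg ha (hu₀ i)) (mul_nonneg hb (hv₀ i))
  · rw [hcoord, hus i hi, hvs i hi]; ring
  · simp only [hcoord, Finset.sum_add_distrib, ← Finset.mul_sum, hu₁, hv₁, mul_one, hab]

lemma eq_sum_smul_stdVec {s : Finset I} {x : L2 I} (hx : ∀ i ∉ s, x i = 0) :
    x = ∑ i ∈ s, x i • stdVec i := by
  classical
  ext j
  rw [lp.coeFn_sum]
  simp only [Finset.sum_apply, lp.coeFn_smul, Pi.smul_apply, smul_eq_mul, stdVec_apply,
    mul_ite, mul_one, mul_zero, Finset.sum_ite_eq]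
  split_ifs with hj
  · rfl
  · exact hx j hj

lemma mem_faceSet_iff {s : Finset I} {x : L2 I} : x ∈ faceSet s ↔ x ∈ barycentricFace s := by
  classical
  constructor
  · refine fun hx => convexHull_min ?_ (convex_barycentricFace s) hx
    rintro _ ⟨i, hi, rfl⟩
    refine ⟨fun j => ?_, fun j hj => ?_, ?_⟩
    · rw [stdVec_apply]; split_ifs <;> norm_num
    · rw [stdVec_apply, if_neg (ne_of_mem_of_not_mem hi hj).symm]
    · simp [stdVec_apply, Finset.mem_coe.1 hi]
  · rintro ⟨hx₀, hxs, hx₁⟩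
    rw [eq_sum_smul_stdVec hxs]
    exact (convex_convexHull ℝ _).sum_mem (fun i _ => hx₀ i) hx₁
      fun i hi => subset_convexHull ℝ _ ⟨i, hi, rfl⟩

lemma faceSet_mono {s t : Finset I} (h : s ⊆ t) : faceSet s ⊆ faceSet t :=
  convexHull_mono (image_mono (Finset.coe_subset.2 h))

lemma mem_of_mem_faceSet_of_pos {t : Finset I} {y : L2 I} (hy : y ∈ faceSet t) {i : I}
    (hi : 0 < y i) : i ∈ t := by
  by_contra hit
  exact hi.ne' ((mem_faceSet_iff.1 hy).2.1 i hit)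

lemma exists_memRelInt_of_mem_faceSet {s : Finset I} {x : L2 I} (hx : x ∈ faceSet s) :
    ∃ σ ⊆ s, σ.Nonempty ∧ memRelInt σ x := by
  classical
  obtain ⟨hx₀, hxs, hx₁⟩ := mem_faceSet_iff.1 hx
  set σ := s.filter fun i => 0 < x i
  have hσ₁ : ∑ i ∈ σ, x i = 1 :=
    hx₁ ▸ Finset.sum_filter_of_ne fun i _ hne => (hx₀ i).lt_of_ne hne.symm
  have hσx : x ∈ faceSet σ := by
    refine mem_faceSet_iff.2 ⟨hx₀, fun i hi => ?_, hσ₁⟩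
    by_cases his : i ∈ s
    · exact le_antisymm (not_lt.1 fun hpos => hi (Finset.mem_filter.2 ⟨his, hpos⟩)) (hx₀ i)
    · exact hxs i his
  refine ⟨σ, Finset.filter_subset _ _, ?_, hσx, fun i hi => (Finset.mem_filter.1 hi).2⟩
  exact Finset.nonempty_iff_ne_empty.2 fun he => by simp [he] at hσ₁

lemma eventually_mem_faceSet {s : Finset I} {x : L2 I} (hx : x ∈ faceSet s) :
    ∀ᶠ y in 𝓝 x, ∀ t, y ∈ faceSet t → x ∈ faceSet t := by
  obtain ⟨σ, -, -, hσx, hpos⟩ := exists_memRelInt_of_mem_faceSet hx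
  have : ∀ᶠ y in 𝓝 x, ∀ i ∈ σ, 0 < y i := (eventually_all_finset σ).2 fun i hi =>
    (lp.lipschitzWith_one_eval 2 i).continuous.continuousAt.eventually (lt_mem_nhds (hpos i hi))
  filter_upwards [this] with y hy t hyt
  exact faceSet_mono (fun i hi => mem_of_mem_faceSet_of_pos hyt (hy i hi)) hσx

end Face

section Complex

variable {I : Type*} {F : Set (Finset I)} {A : Set (L2 I)}

lemma openStar_anti {s t : Finset I} (hst : s ⊆ t) : openStar F t ⊆ openStar F s := by
  intro x hx
  obtain ⟨u, hu, hx⟩ := mem_iUnion₂.1 hx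
  obtain ⟨htu, hx⟩ := mem_iUnion.1 hx
  exact mem_iUnion₂.2 ⟨u, hu, mem_iUnion.2 ⟨hst.trans htu, hx⟩⟩

lemma hullFaces_subset {G : Set (Finset I)} (hGF : G ⊆ F) (hG : IsSubcomplex G)
    (hAG : A ⊆ cpxCarrier G) : hullFaces F A ⊆ G :=
  sInter_subset_of_mem ⟨hGF, hG, hAG⟩

def starFaces (F : Set (Finset I)) (A : Set (L2 I)) : Set (Finset I) :=
  {t | t ∈ F ∧ (openStar F t ∩ A).Nonempty}

lemma subset_cpxCarrier_starFaces (hF : IsSubcomplex F) (hAF : A ⊆ cpxCarrier F) :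
    A ⊆ cpxCarrier (starFaces F A) := by
  intro a ha
  obtain ⟨s, hs, has⟩ := mem_iUnion₂.1 (hAF ha)
  obtain ⟨σ, hσs, hσ, hσa⟩ := exists_memRelInt_of_mem_faceSet has
  have hσF : σ ∈ F := hF.down_closed s hs σ hσ hσs
  have haσ : a ∈ openStar F σ :=
    mem_iUnion₂.2 ⟨σ, hσF, mem_iUnion.2 ⟨subset_rfl, hσa⟩⟩
  exact mem_iUnion₂.2 ⟨σ, ⟨hσF, a, haσ, ha⟩, hσa.1⟩

lemma isSubcomplex_starFaces (hF : IsSubcomplex F) (hA : A.Nonempty)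
    (hAF : A ⊆ cpxCarrier F) : IsSubcomplex (starFaces F A) where
  nonempty := by
    obtain ⟨a, ha⟩ := hA
    obtain ⟨s, hs, -⟩ := mem_iUnion₂.1 (subset_cpxCarrier_starFaces hF hAF ha)
    exact ⟨s, hs⟩
  faces_nonempty s hs := hF.faces_nonempty s hs.1
  down_closed s hs t ht hts :=
    ⟨hF.down_closed s hs.1 t ht hts, hs.2.mono (inter_subset_inter_left _ (openStar_anti hts))⟩

lemma hullFaces_subset_starFaces (hF : IsSubcomplex F) (hA : A.Nonempty)
    (hAF : A ⊆ cpxCarrier F) : hullFaces F A ⊆ starFaces F A :=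
  hullFaces_subset (fun _ ht => ht.1) (isSubcomplex_starFaces hF hA hAF)
    (subset_cpxCarrier_starFaces hF hAF)

end Complex

lemma lipWithin_le_of_eventually {X Y : Type*} [PseudoMetricSpace X] [PseudoMetricSpace Y]
    {f : X → Y} {S : Set X} {x : X} {K : ℝ≥0}
    (h : ∀ᶠ y in 𝓝[S] x, edist (f x) (f y) ≤ K * edist x y) : lipWithin f S x ≤ K := by
  obtain ⟨δ, hδ, hδS⟩ := mem_nhdsWithin_iff.1 h
  refine liminf_le_of_frequently_le' (Eventually.frequently ?_)
  filter_upwards [Ioo_mem_nhdsGT hδ] with r ⟨hr, hrδ⟩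
  have hsup : (⨆ y ∈ S ∩ ball x r, edist (f x) (f y)) ≤ K * ENNReal.ofReal r := by
    refine iSup₂_le fun y ⟨hyS, hyx⟩ => (hδS ⟨ball_subset_ball hrδ.le hyx, hyS⟩).trans ?_
    rw [edist_comm]
    gcongr
    exact (edist_lt_ofReal.2 hyx).le
  calc (⨆ y ∈ S ∩ ball x r, edist (f x) (f y)) / ENNReal.ofReal r
      ≤ K * ENNReal.ofReal r / ENNReal.ofReal r := ENNReal.div_le_div_right hsup _
    _ = K := ENNReal.mul_div_cancel_right (by simpa using hr) ENNReal.ofReal_ne_top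

theorem stmt_5_general {I : Type*} {Y : Type*} [MetricSpace Y]
    (F : Set (Finset I)) (hF : IsSubcomplex F)
    (h : L2 I → Y) (L : ℝ)
    (A : Set (L2 I)) (hA : A.Nonempty) (hAsub : A ⊆ cpxCarrier F)
    (hlip : ∀ s ∈ F, (openStar F s ∩ A).Nonempty →
      LipschitzOnWith (Real.toNNReal L) h (faceSet s)) :
    ∀ x ∈ cpxCarrier (hullFaces F A),
      lipWithin h (cpxCarrier (hullFaces F A)) x ≤ ENNReal.ofReal L := by
  intro x hx
  have hhull := hullFaces_subset_starFaces hF hA hAsub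
  obtain ⟨s, -, hxs⟩ := mem_iUnion₂.1 hx
  refine lipWithin_le_of_eventually ?_
  filter_upwards [nhdsWithin_le_nhds (eventually_mem_faceSet hxs), self_mem_nhdsWithin]
    with y hnear hy
  obtain ⟨t, ht, hyt⟩ := mem_iUnion₂.1 hy
  exact hlip t (hhull ht).1 (hhull ht).2 (hnear t hyt) hyt

/-- If `h : |Σ| → Y` is `L`-Lipschitz on every face whose open star meets `A`,
then the restriction of `h` to `|Hull(A)|` has pointwise Lipschitz constant `≤ L` everywhere. -/
theorem stmt_5 {I : Type*} [Nonempty I] {Y : Type*} [MetricSpace Y]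
    (F : Set (Finset I)) (hF : IsSubcomplex F)
    (h : L2 I → Y) (L : ℝ) (hL : 0 < L)
    (A : Set (L2 I)) (hA : A.Nonempty) (hAsub : A ⊆ cpxCarrier F)
    (hlip : ∀ s ∈ F, (openStar F s ∩ A).Nonempty →
      LipschitzOnWith (Real.toNNReal L) h (faceSet s)) :
    ∀ x ∈ cpxCarrier (hullFaces F A),
      lipWithin h (cpxCarrier (hullFaces F A)) x ≤ ENNReal.ofReal L :=
  stmt_5_general F hF h L A hA hAsub hlip
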